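/- arXiv:2203.03425 — 2 statements merged into one kernel-verified Lean document; each statement's English description precedes it below -/
import Mathlib

section
/- Let γ > 0 and let π: Lit_{[n]}(τ) → ℕ be an ℕ-interpretation on universe [n] with the strong (k,γ)-extension property, and assume γn ≥ 2. Then for every formula ψ(x_1,…,x_i) ∈ FO^k(τ) with associated ∞-expression g_ψ and every tuple ā of distinct elements of [n], either (1) π⟦ψ(ā)⟧ = g_ψ[ρ^π_ā] ∈ ℕ, or (2) g_ψ[ρ^π_ā] = ∞ and π⟦ψ(ā)⟧ ≥ γn. -/
open MeasureTheory Filter Set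
open scoped ENNReal BigOperators

/-- A (fully instantiated) literal over the relational vocabulary given by the
relation symbols `R` with arities `ar`, on the universe `A`: a relation symbol,
a tuple of arguments, and a polarity (`true` = positive atom, `false` = negated atom). -/
structure Lit (R : Type) (ar : R → ℕ) (A : Type) : Type where
  rel : R
  args : Fin (ar rel) → A
  pos : Bool

/-- A (fully instantiated) relational atom. -/
abbrev Atoms (R : Type) (ar : R → ℕ) (A : Type) : Type := (r : R) × (Fin (ar r) → A)

variable {R : Type} {ar : R → ℕ} {A B K : Type}

/-- Renaming of a literal along a map of universes. -/
def Lit.map (f : A → B) (l : Lit R ar A) : Lit R ar B :=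
  ⟨l.rel, fun j => f (l.args j), l.pos⟩

/-- A `K`-interpretation (or atomic type) is model-defining / consistent (w.r.t. the
zero element `z` of `K`) if out of each pair of complementary literals exactly one is
mapped to `z`. -/
def ModelDefining (z : K) (π : Lit R ar A → K) : Prop :=
  ∀ (r : R) (as : Fin (ar r) → A), (π ⟨r, as, true⟩ = z ↔ π ⟨r, as, false⟩ ≠ z)

/-- The atomic `m`-type realised by the tuple `a` in the interpretation `π`. -/
def typeOf {m : ℕ} (π : Lit R ar A → K) (a : Fin m → A) : Lit R ar (Fin m) → K :=
  fun l => π (l.map a)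

/-- The tuple `a` (of pairwise distinct elements) realises the atomic `m`-type `ρ` in `π`. -/
def Realizes {m : ℕ} (π : Lit R ar A → K) (a : Fin m → A) (ρ : Lit R ar (Fin m) → K) : Prop :=
  Function.Injective a ∧ typeOf π a = ρ

/-- The atomic `(m+1)`-type `ρp` extends the atomic `m`-type `ρ`. -/
def Extends {m : ℕ} (ρp : Lit R ar (Fin (m+1)) → K) (ρ : Lit R ar (Fin m) → K) : Prop :=
  ∀ l : Lit R ar (Fin m), ρp (l.map Fin.castSucc) = ρ l

/-- The `k`-extension property of an interpretation `π` (with zero element `z`). -/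
def ExtProp (z : K) (π : Lit R ar A → K) (k : ℕ) : Prop :=
  ∀ m, m < k → ∀ ρ : Lit R ar (Fin m) → K, ModelDefining z ρ →
    ∀ ρp : Lit R ar (Fin (m+1)) → K, ModelDefining z ρp → Extends ρp ρ →
      ∀ a : Fin m → A, Realizes π a ρ →
        ∃ b : A, b ∉ Set.range a ∧ Realizes π (Fin.snoc a b) ρp

/-- A sequence of extended nonnegative reals converges to `L` exponentially fast. -/
def ExpConv (f : ℕ → ℝ≥0∞) (L : ℝ≥0∞) : Prop :=
  ∃ C q : ℝ≥0∞, C ≠ ⊤ ∧ q < 1 ∧ ∀ n, f n ≤ L + C * q ^ n ∧ L ≤ f n + C * q ^ n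

/-- The interpretation determined by a sample point: each atom gets a pair
(value of positive literal, value of negated literal). -/
def interpOf (ω : Atoms R ar A → K × K) : Lit R ar A → K :=
  fun l => if l.pos then (ω ⟨l.rel, l.args⟩).1 else (ω ⟨l.rel, l.args⟩).2

/-- The per-atom distribution: with probability 1/2 the atom is true (its negation
gets value `z`, i.e. false, and its value is sampled from `p`), with probability 1/2
it is false (symmetrically). -/
noncomputable def atomMeasure [MeasurableSpace K] (z : K) (p : Measure K) : Measure (K × K) :=
  (2⁻¹ : ℝ≥0∞) • (Measure.map (fun j => (j, z)) p + Measure.map (fun j => (z, j)) p)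

/-- The distribution `μ_{n,p}` of random `K`-interpretations on universe `[n]`,
presented on the sample space assigning to each atom the pair of values of its
positive and negated literal. -/
noncomputable def muI [MeasurableSpace K] [Fintype R] (z : K) (p : Measure K) (n : ℕ) :
    Measure (Atoms R ar (Fin n) → K × K) :=
  Measure.pi fun _ => atomMeasure z p
/-- First-order formulae in negation normal form over the vocabulary `(R, ar)`,
written with the *excluding* quantifiers `∃≠` (`exq`) and `∀≠` (`allq`) which range
only over elements distinct from the values of all variables currently in scope. -/
inductive FOx (R : Type) (ar : R → ℕ) : ℕ → Type
  | eq   : {i : ℕ} → Fin i → Fin i → FOx R ar i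
  | ne   : {i : ℕ} → Fin i → Fin i → FOx R ar i
  | atom : {i : ℕ} → (r : R) → (Fin (ar r) → Fin i) → Bool → FOx R ar i
  | or   : {i : ℕ} → FOx R ar i → FOx R ar i → FOx R ar i
  | and  : {i : ℕ} → FOx R ar i → FOx R ar i → FOx R ar i
  | exq  : {i : ℕ} → FOx R ar (i+1) → FOx R ar i
  | allq : {i : ℕ} → FOx R ar (i+1) → FOx R ar i

/-- The width of a formula: the maximal number of variables simultaneously in scope.
A formula `ψ : FOx R ar i` with `ψ.width ≤ k` is a formula of the `k`-variable
fragment `FO^k`. -/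
def FOx.width : {i : ℕ} → FOx R ar i → ℕ
  | i, .eq _ _ => i
  | i, .ne _ _ => i
  | i, .atom _ _ _ => i
  | _, .or φ θ => max φ.width θ.width
  | _, .and φ θ => max φ.width θ.width
  | _, .exq φ => φ.width
  | _, .allq φ => φ.width

/-- Semantics of formulae with excluding quantifiers in a lattice semiring. -/
noncomputable def evalLx [DistribLattice K] [BoundedOrder K] [Fintype A] [DecidableEq A]
    (π : Lit R ar A → K) : {i : ℕ} → FOx R ar i → (Fin i → A) → K
  | _, .eq j l, v => if v j = v l then ⊤ else ⊥
  | _, .ne j l, v => if v j = v l then ⊥ else ⊤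
  | _, .atom r as pos, v => π ⟨r, fun j => v (as j), pos⟩
  | _, .or φ θ, v => evalLx π φ v ⊔ evalLx π θ v
  | _, .and φ θ, v => evalLx π φ v ⊓ evalLx π θ v
  | _, .exq φ, v => (Finset.univ.filter fun b : A => ∀ j, v j ≠ b).sup
      fun b => evalLx π φ (Fin.snoc v b)
  | _, .allq φ, v => (Finset.univ.filter fun b : A => ∀ j, v j ≠ b).inf
      fun b => evalLx π φ (Fin.snoc v b)

/-- Semantics of formulae with excluding quantifiers in a commutative semiring. -/
noncomputable def evalSx [CommSemiring K] [Fintype A] [DecidableEq A]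
    (π : Lit R ar A → K) : {i : ℕ} → FOx R ar i → (Fin i → A) → K
  | _, .eq j l, v => if v j = v l then 1 else 0
  | _, .ne j l, v => if v j = v l then 0 else 1
  | _, .atom r as pos, v => π ⟨r, fun j => v (as j), pos⟩
  | _, .or φ θ, v => evalSx π φ v + evalSx π θ v
  | _, .and φ θ, v => evalSx π φ v * evalSx π θ v
  | _, .exq φ, v => ∑ b ∈ (Finset.univ.filter fun b : A => ∀ j, v j ≠ b),
      evalSx π φ (Fin.snoc v b)
  | _, .allq φ, v => ∏ b ∈ (Finset.univ.filter fun b : A => ∀ j, v j ≠ b),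
      evalSx π φ (Fin.snoc v b)

/-- Extension of an assignment of values to the literals in variables `x_1, …, x_i`
to the literals in variables `x_1, …, x_{i+1}`: a literal not containing the new
variable keeps its value under `ρ`, a literal containing the new variable gets its
value from `s`. -/
def extendA {i : ℕ} (ρ : Lit R ar (Fin i) → K) (s : Lit R ar (Fin (i+1)) → K) :
    Lit R ar (Fin (i+1)) → K := fun l =>
  if h : ∀ j, l.args j ≠ Fin.last i
  then ρ ⟨l.rel, fun j => (l.args j).castPred (h j), l.pos⟩
  else s l

/-- Evaluation (in a lattice semiring `K`, with the distinguished element `ε` as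
value of `e`) of the polynomial `f_ψ` over the three-element semiring
`E = ({0,e,1}, +, ·)` associated with a formula `ψ` with excluding quantifiers:
at an existential quantifier we take the supremum over all consistent selector
functions of new literals into `{0,1}`, at a universal quantifier the infimum over
all consistent selector functions into `{0,e}` (selector functions are presented by
maps `s` from the new atoms to `Bool`, telling which of the two complementary
literals is nonzero; the value `f_ψ[ρ]` only depends on their action on the new
literals). -/
noncomputable def fEval [DistribLattice K] [BoundedOrder K] [Fintype R] [DecidableEq R]
    (ε : K) : {i : ℕ} → FOx R ar i → (Lit R ar (Fin i) → K) → K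
  | _, .eq j l, _ => if j = l then ⊤ else ⊥
  | _, .ne j l, _ => if j = l then ⊥ else ⊤
  | _, .atom r as pos, ρ => ρ ⟨r, as, pos⟩
  | _, .or φ θ, ρ => fEval ε φ ρ ⊔ fEval ε θ ρ
  | _, .and φ θ, ρ => fEval ε φ ρ ⊓ fEval ε θ ρ
  | i, .exq φ, ρ => Finset.univ.sup fun s : Atoms R ar (Fin (i+1)) → Bool =>
      fEval ε φ (extendA ρ fun l => if s ⟨l.rel, l.args⟩ = l.pos then ⊤ else ⊥)
  | i, .allq φ, ρ => Finset.univ.inf fun s : Atoms R ar (Fin (i+1)) → Bool =>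
      fEval ε φ (extendA ρ fun l => if s ⟨l.rel, l.args⟩ = l.pos then ε else ⊥)
/-- The extension `ρp` (of an atomic type, to the variables `x_1,…,x_{m+1}`) is *large*:
out of each pair of complementary literals containing the new variable, one is mapped
to `0` and the other to a number `≥ 2`. -/
def LargeExt {m : ℕ} (ρp : Lit R ar (Fin (m+1)) → ℕ) : Prop :=
  ∀ (r : R) (as : Fin (ar r) → Fin (m+1)), (∃ j, as j = Fin.last m) →
    ((ρp ⟨r, as, true⟩ = 0 ∧ 2 ≤ ρp ⟨r, as, false⟩) ∨
     (2 ≤ ρp ⟨r, as, true⟩ ∧ ρp ⟨r, as, false⟩ = 0))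

/-- `ρ =_𝔹 ρ'`: the two atomic types map exactly the same literals to `0`. -/
def BoolEq {m : ℕ} (ρ ρ' : Lit R ar (Fin m) → ℕ) : Prop := ∀ l, (ρ l = 0 ↔ ρ' l = 0)

/-- The strong `(k,γ)`-extension property of an `ℕ`-interpretation: for every tuple and
every extension of its type, at least `γ·|A|` elements realise a large extension with
the same underlying Boolean type. -/
def StrongExtProp (π : Lit R ar A → ℕ) (k : ℕ) (γ : ℝ) : Prop :=
  ∀ m, m < k → ∀ a : Fin m → A, Function.Injective a →
    ∀ ρp : Lit R ar (Fin (m+1)) → ℕ, ModelDefining 0 ρp → Extends ρp (typeOf π a) →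
      γ * (Nat.card A) ≤
        ({b : A | b ∉ Set.range a ∧ BoolEq (typeOf π (Fin.snoc a b)) ρp ∧
          LargeExt (typeOf π (Fin.snoc a b))}.ncard : ℝ)
/-- `∞`-expressions over the indeterminates `X`: formal expressions built from the
indeterminates, constants `0`, `1`, `∞`, binary `+`, `·`, and the unary infinite
power `^∞`. -/
inductive IExp (X : Type) : Type
  | var : X → IExp X
  | zero : IExp X
  | one : IExp X
  | inf : IExp X
  | add : IExp X → IExp X → IExp X
  | mul : IExp X → IExp X → IExp X
  | ipow : IExp X → IExp X

/-- The infinite power on `ℕ^∞`: `0^∞ = 0`, `1^∞ = 1`, `x^∞ = ∞` for `x ≥ 2`. -/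
def infPow (x : ℕ∞) : ℕ∞ := if x = 0 then 0 else if x = 1 then 1 else ⊤

/-- Evaluation of an `∞`-expression in `ℕ^∞ = ℕ ∪ {∞}` under an assignment `σ` of the
indeterminates (with `0·∞ = 0` and `n·∞ = n+∞ = ∞` for `n ≥ 1`). -/
def IExp.eval {X : Type} (σ : X → ℕ∞) : IExp X → ℕ∞
  | .var x => σ x
  | .zero => 0
  | .one => 1
  | .inf => ⊤
  | .add f g => f.eval σ + g.eval σ
  | .mul f g => f.eval σ * g.eval σ
  | .ipow f => infPow (f.eval σ)
/-- Evaluation of the `∞`-expression `g_ψ` associated with a formula `ψ` (with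
excluding quantifiers) under an assignment `ρ` of the literals in scope:
`g_{∃≠ y φ} = ∞·(Σ_s g_φ(ρ,s))` and `g_{∀≠ y φ} = (Π_s g_φ(ρ,s))^∞`, where `s`
ranges over the consistent selector functions mapping the new literals to `{0,∞}`
(presented by maps from the new atoms to `Bool`; the value only depends on the
action on the new literals). -/
noncomputable def gEval [Fintype R] [DecidableEq R] :
    {i : ℕ} → FOx R ar i → (Lit R ar (Fin i) → ℕ∞) → ℕ∞
  | _, .eq j l, _ => if j = l then 1 else 0
  | _, .ne j l, _ => if j = l then 0 else 1
  | _, .atom r as pos, ρ => ρ ⟨r, as, pos⟩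
  | _, .or φ θ, ρ => gEval φ ρ + gEval θ ρ
  | _, .and φ θ, ρ => gEval φ ρ * gEval θ ρ
  | i, .exq φ, ρ => ⊤ * ∑ s : Atoms R ar (Fin (i+1)) → Bool,
      gEval φ (extendA ρ fun l => if s ⟨l.rel, l.args⟩ = l.pos then ⊤ else 0)
  | i, .allq φ, ρ => infPow (∏ s : Atoms R ar (Fin (i+1)) → Bool,
      gEval φ (extendA ρ fun l => if s ⟨l.rel, l.args⟩ = l.pos then ⊤ else 0))

/-!
Write `x ~ y` if `x^∞ = y^∞`, i.e. `x` and `y` are both `0`, both `1` or both `≥ 2`. Then `g_ψ`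
is monotone, respects `~`, and respects which literals are mapped to `0`. Since `γn ≥ 2`, the
claim for `φ(ā, b)` gives `π⟦φ(ā,b)⟧ ~ g_φ[ρ^π_{ā,b}]`, and the theorem follows by induction.

At a quantifier, the type of `(ā, b)` lies below the selector of its own Boolean type and has
the same zeros; and for each selector `s` the strong extension property provides `γn` elements
`b` whose type is `~`-equivalent to `s`, as its large values become `∞`. So a nonzero term of
`g_{∃≠y φ}` forces `γn` nonzero summands of `π⟦∃≠y φ(ā)⟧`, and an infinite factor of
`g_{∀≠y φ}` forces `γn` factors `≥ 2` of `π⟦∀≠y φ(ā)⟧`, none of them `0`, so that the product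
is at least `2^{γn} ≥ γn`.
-/

lemma ENat.eq_zero_or_eq_one_or_two_le (x : ℕ∞) : x = 0 ∨ x = 1 ∨ 2 ≤ x := by
  induction x using ENat.recTopCoe with
  | top => exact .inr (.inr le_top)
  | coe m => norm_cast; omega

@[simp] lemma infPow_zero : infPow 0 = 0 := rfl

@[simp] lemma infPow_one : infPow 1 = 1 := rfl

@[simp] lemma infPow_top : infPow ⊤ = ⊤ := rfl

lemma infPow_of_two_le {x : ℕ∞} (h : 2 ≤ x) : infPow x = ⊤ := by
  have h0 : x ≠ 0 := by rintro rfl; simp at h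
  have h1 : x ≠ 1 := by rintro rfl; simp at h
  simp [infPow, h0, h1]

lemma infPow_eq_zero {x : ℕ∞} : infPow x = 0 ↔ x = 0 := by
  rcases x.eq_zero_or_eq_one_or_two_le with rfl | rfl | hx
  · simp
  · simp
  · simp [infPow_of_two_le hx, (zero_lt_two.trans_le hx).ne']

lemma infPow_eq_one {x : ℕ∞} : infPow x = 1 ↔ x = 1 := by
  rcases x.eq_zero_or_eq_one_or_two_le with rfl | rfl | hx
  · simp
  · simp
  · simp [infPow_of_two_le hx, ((by norm_num : (1 : ℕ∞) < 2).trans_le hx).ne']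

lemma infPow_eq_top {x : ℕ∞} : infPow x = ⊤ ↔ 2 ≤ x := by
  rcases x.eq_zero_or_eq_one_or_two_le with rfl | rfl | hx <;> simp [infPow_of_two_le, *]

lemma infPow_infPow (x : ℕ∞) : infPow (infPow x) = infPow x := by
  rcases x.eq_zero_or_eq_one_or_two_le with rfl | rfl | hx <;> simp [infPow_of_two_le, *]

lemma infPow_mono : Monotone infPow := by
  intro x y h
  rcases x.eq_zero_or_eq_one_or_two_le with rfl | rfl | hx
  · simp
  · rcases y.eq_zero_or_eq_one_or_two_le with rfl | rfl | hy
    · simp at h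
    · rfl
    · simp [infPow_of_two_le hy]
  · simp [infPow_of_two_le hx, infPow_of_two_le (hx.trans h)]

lemma infPow_add_infPow (x y : ℕ∞) : infPow (infPow x + infPow y) = infPow (x + y) := by
  rcases x.eq_zero_or_eq_one_or_two_le with rfl | rfl | hx
  · simp [infPow_infPow]
  · rcases y.eq_zero_or_eq_one_or_two_le with rfl | rfl | hy
    · simp
    · decide
    · simp [infPow_of_two_le hy, infPow_of_two_le (hy.trans le_add_self)]
  · simp [infPow_of_two_le hx, infPow_of_two_le (hx.trans le_self_add)]

lemma infPow_mul_infPow (x y : ℕ∞) : infPow (infPow x * infPow y) = infPow (x * y) := by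
  rcases x.eq_zero_or_eq_one_or_two_le with rfl | rfl | hx
  · simp
  · simp [infPow_infPow]
  · rcases y.eq_zero_or_eq_one_or_two_le with rfl | rfl | hy
    · simp
    · simp [infPow_infPow]
    · have : 2 ≤ x * y := hx.trans (le_mul_of_one_le_right' (one_le_two.trans hy))
      simp [infPow_of_two_le hx, infPow_of_two_le hy, infPow_of_two_le this]

lemma infPow_add_congr {x y x' y' : ℕ∞} (hx : infPow x = infPow x')
    (hy : infPow y = infPow y') :
    infPow (x + y) = infPow (x' + y') := by
  rw [← infPow_add_infPow, hx, hy, infPow_add_infPow]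

lemma infPow_mul_congr {x y x' y' : ℕ∞} (hx : infPow x = infPow x')
    (hy : infPow y = infPow y') :
    infPow (x * y) = infPow (x' * y') := by
  rw [← infPow_mul_infPow, hx, hy, infPow_mul_infPow]

lemma infPow_sum_congr {ι : Type*} (t : Finset ι) {f g : ι → ℕ∞}
    (h : ∀ x ∈ t, infPow (f x) = infPow (g x)) :
    infPow (∑ x ∈ t, f x) = infPow (∑ x ∈ t, g x) := by
  induction t using Finset.cons_induction with
  | empty => rfl
  | cons x t hx ih =>
    simp only [Finset.sum_cons]
    exact infPow_add_congr (h x (Finset.mem_cons_self x t))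
      (ih fun y hy => h y (Finset.mem_cons_of_mem hy))

lemma infPow_prod_congr {ι : Type*} (t : Finset ι) {f g : ι → ℕ∞}
    (h : ∀ x ∈ t, infPow (f x) = infPow (g x)) :
    infPow (∏ x ∈ t, f x) = infPow (∏ x ∈ t, g x) := by
  induction t using Finset.cons_induction with
  | empty => rfl
  | cons x t hx ih =>
    simp only [Finset.prod_cons]
    exact infPow_mul_congr (h x (Finset.mem_cons_self x t))
      (ih fun y hy => h y (Finset.mem_cons_of_mem hy))

section extendA

variable {i : ℕ}

lemma extendA_map_castSucc (ρ : Lit R ar (Fin i) → K) (s : Lit R ar (Fin (i+1)) → K)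
    (l : Lit R ar (Fin i)) : extendA ρ s (l.map Fin.castSucc) = ρ l := by
  simp [extendA, Lit.map, Fin.castSucc_ne_last]

lemma extendA_of_exists_eq_last (ρ : Lit R ar (Fin i) → K) (s : Lit R ar (Fin (i+1)) → K)
    {l : Lit R ar (Fin (i+1))} (hl : ∃ j, l.args j = Fin.last i) : extendA ρ s l = s l := by
  simp [extendA, hl]

lemma extendA_rel {L : Type} (r : K → L → Prop) {ρ₁ : Lit R ar (Fin i) → K}
    {ρ₂ : Lit R ar (Fin i) → L} {s₁ : Lit R ar (Fin (i+1)) → K}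
    {s₂ : Lit R ar (Fin (i+1)) → L}
    (hρ : ∀ l, r (ρ₁ l) (ρ₂ l))
    (hs : ∀ l : Lit R ar (Fin (i+1)), (∃ j, l.args j = Fin.last i) → r (s₁ l) (s₂ l))
    (l : Lit R ar (Fin (i+1))) : r (extendA ρ₁ s₁ l) (extendA ρ₂ s₂ l) := by
  unfold extendA
  split_ifs with h
  · exact hρ _
  · push Not at h
    exact hs l h

lemma comp_extendA {L : Type} (f : K → L) (ρ : Lit R ar (Fin i) → K)
    (s : Lit R ar (Fin (i+1)) → K) : f ∘ extendA ρ s = extendA (f ∘ ρ) (f ∘ s) := by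
  funext l
  simp only [Function.comp_apply, extendA]
  split_ifs <;> rfl

lemma ModelDefining.extendA {z : K} {ρ : Lit R ar (Fin i) → K} {s : Lit R ar (Fin (i+1)) → K}
    (hρ : ModelDefining z ρ) (hs : ModelDefining z s) : ModelDefining z (extendA ρ s) := by
  intro r as
  unfold _root_.extendA
  split_ifs
  · exact hρ r _
  · exact hs r as

lemma ModelDefining.typeOf {z : K} {π : Lit R ar A → K} (hπ : ModelDefining z π)
    (a : Fin i → A) : ModelDefining z (typeOf π a) :=
  fun r _ => hπ r _

lemma extendA_typeOf_snoc (π : Lit R ar A → K) (a : Fin i → A) (b : A) :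
    extendA (typeOf π a) (typeOf π (Fin.snoc a b)) = typeOf π (Fin.snoc a b) := by
  funext l
  unfold extendA
  split_ifs with h
  · simp only [typeOf, Lit.map]
    congr
    funext j
    conv_rhs => rw [← Fin.castSucc_castPred (l.args j) (h j), Fin.snoc_castSucc]
  · rfl

end extendA

section gEval

variable [Fintype R] [DecidableEq R]

lemma gEval_mono {i : ℕ} (ψ : FOx R ar i) {ρ₁ ρ₂ : Lit R ar (Fin i) → ℕ∞}
    (h : ∀ l, ρ₁ l ≤ ρ₂ l) : gEval ψ ρ₁ ≤ gEval ψ ρ₂ := by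
  induction ψ with
  | eq | ne => exact le_rfl
  | atom r as pos => exact h _
  | or φ θ ihφ ihθ => exact add_le_add (ihφ h) (ihθ h)
  | and φ θ ihφ ihθ => exact mul_le_mul' (ihφ h) (ihθ h)
  | exq φ ih =>
    exact mul_le_mul_right
      (Finset.sum_le_sum fun s _ => ih (extendA_rel _ h fun _ _ => le_rfl)) _
  | allq φ ih =>
    exact infPow_mono (Finset.prod_le_prod' fun s _ => ih (extendA_rel _ h fun _ _ => le_rfl))

lemma gEval_eq_zero_congr {i : ℕ} (ψ : FOx R ar i) {ρ₁ ρ₂ : Lit R ar (Fin i) → ℕ∞}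
    (h : ∀ l, ρ₁ l = 0 ↔ ρ₂ l = 0) : gEval ψ ρ₁ = 0 ↔ gEval ψ ρ₂ = 0 := by
  induction ψ with
  | eq | ne => rfl
  | atom r as pos => exact h _
  | or φ θ ihφ ihθ => simp only [gEval, add_eq_zero, ihφ h, ihθ h]
  | and φ θ ihφ ihθ => simp only [gEval, mul_eq_zero, ihφ h, ihθ h]
  | exq φ ih =>
    simp only [gEval, mul_eq_zero, ENat.top_ne_zero, false_or, Finset.sum_eq_zero_iff]
    refine forall₂_congr fun s _ => ih ?_
    exact extendA_rel (fun x y => x = 0 ↔ y = 0) h fun _ _ => Iff.rfl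
  | allq φ ih =>
    simp only [gEval, infPow_eq_zero, Finset.prod_eq_zero_iff]
    refine exists_congr fun s => and_congr_right fun _ => ih ?_
    exact extendA_rel (fun x y => x = 0 ↔ y = 0) h fun _ _ => Iff.rfl

lemma gEval_infPow_congr {i : ℕ} (ψ : FOx R ar i) {ρ₁ ρ₂ : Lit R ar (Fin i) → ℕ∞}
    (h : ∀ l, infPow (ρ₁ l) = infPow (ρ₂ l)) :
    infPow (gEval ψ ρ₁) = infPow (gEval ψ ρ₂) := by
  induction ψ with
  | eq | ne => rfl
  | atom r as pos => exact h _
  | or φ θ ihφ ihθ => exact infPow_add_congr (ihφ h) (ihθ h)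
  | and φ θ ihφ ihθ => exact infPow_mul_congr (ihφ h) (ihθ h)
  | exq φ ih =>
    refine infPow_mul_congr rfl (infPow_sum_congr _ fun s _ => ih ?_)
    exact extendA_rel (fun x y => infPow x = infPow y) h fun _ _ => rfl
  | allq φ ih =>
    simp only [gEval, infPow_infPow]
    refine infPow_prod_congr _ fun s _ => ih ?_
    exact extendA_rel (fun x y => infPow x = infPow y) h fun _ _ => rfl

end gEval

/-- `selectLit s ⊤ 0` is the assignment of the new literals by the selector `s` in `gEval`. -/
def selectLit (s : Atoms R ar B → Bool) (x z : K) : Lit R ar B → K :=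
  fun l => if s ⟨l.rel, l.args⟩ = l.pos then x else z

lemma modelDefining_selectLit {x z : K} (hxz : x ≠ z) (s : Atoms R ar B → Bool) :
    ModelDefining z (selectLit s x z) := by
  intro r as
  cases s ⟨r, as⟩ <;> simp [selectLit, hxz]

def atomTruth (ρ : Lit R ar B → ℕ) : Atoms R ar B → Bool :=
  fun t => decide (ρ ⟨t.1, t.2, true⟩ ≠ 0)

lemma ModelDefining.eq_zero_iff_atomTruth_ne {ρ : Lit R ar B → ℕ} (hρ : ModelDefining 0 ρ)
    (l : Lit R ar B) : ρ l = 0 ↔ atomTruth ρ ⟨l.rel, l.args⟩ ≠ l.pos := by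
  obtain ⟨r, as, pos⟩ := l
  have := hρ r as
  cases pos <;> by_cases h : ρ ⟨r, as, true⟩ = 0 <;> simp_all [atomTruth]

lemma ModelDefining.cast_le_selectLit {ρ : Lit R ar B → ℕ} (hρ : ModelDefining 0 ρ)
    (l : Lit R ar B) : (ρ l : ℕ∞) ≤ selectLit (atomTruth ρ) ⊤ 0 l := by
  unfold selectLit
  split_ifs with h
  · exact le_top
  · simp [hρ.eq_zero_iff_atomTruth_ne l, h]

lemma ModelDefining.cast_eq_zero_iff_selectLit {ρ : Lit R ar B → ℕ} (hρ : ModelDefining 0 ρ)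
    (l : Lit R ar B) : (ρ l : ℕ∞) = 0 ↔ selectLit (atomTruth ρ) (⊤ : ℕ∞) 0 l = 0 := by
  simp [selectLit, hρ.eq_zero_iff_atomTruth_ne l]

lemma LargeExt.eq_zero_or_two_le {m : ℕ} {σ : Lit R ar (Fin (m+1)) → ℕ} (hσ : LargeExt σ)
    {l : Lit R ar (Fin (m+1))} (hl : ∃ j, l.args j = Fin.last m) : σ l = 0 ∨ 2 ≤ σ l := by
  obtain ⟨r, as, pos⟩ := l
  rcases hσ r as hl with ⟨h₁, h₂⟩ | ⟨h₁, h₂⟩ <;> cases pos <;> simp_all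

lemma LargeExt.infPow_eq_selectLit {m : ℕ} {σ : Lit R ar (Fin (m+1)) → ℕ} (hσ : LargeExt σ)
    {s : Atoms R ar (Fin (m+1)) → Bool} {l : Lit R ar (Fin (m+1))}
    (hl : ∃ j, l.args j = Fin.last m) (hzero : σ l = 0 ↔ selectLit s 2 0 l = 0) :
    infPow (σ l) = infPow (selectLit s ⊤ 0 l) := by
  unfold selectLit at hzero ⊢
  split_ifs at hzero ⊢ with hs
  · have h2 : 2 ≤ σ l := (hσ.eq_zero_or_two_le hl).resolve_left (by simpa using hzero)
    exact infPow_of_two_le (by exact_mod_cast h2)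
  · simp [hzero.mpr rfl]

section typeOf_snoc

variable [Fintype R] [DecidableEq R] {π : Lit R ar A → ℕ} {m : ℕ}

lemma gEval_typeOf_snoc_le (hπ : ModelDefining 0 π) (φ : FOx R ar (m+1)) (a : Fin m → A)
    (b : A) :
    gEval φ (Nat.cast ∘ typeOf π (Fin.snoc a b)) ≤
      gEval φ (extendA (Nat.cast ∘ typeOf π a)
        (selectLit (atomTruth (typeOf π (Fin.snoc a b))) ⊤ 0)) := by
  rw [← extendA_typeOf_snoc, comp_extendA]
  refine gEval_mono φ (extendA_rel (· ≤ ·) (fun _ => le_rfl) fun l _ => ?_)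
  rw [extendA_typeOf_snoc]
  exact (hπ.typeOf (Fin.snoc a b)).cast_le_selectLit l

lemma gEval_typeOf_snoc_eq_zero_iff (hπ : ModelDefining 0 π) (φ : FOx R ar (m+1))
    (a : Fin m → A) (b : A) :
    gEval φ (Nat.cast ∘ typeOf π (Fin.snoc a b)) = 0 ↔
      gEval φ (extendA (Nat.cast ∘ typeOf π a)
        (selectLit (atomTruth (typeOf π (Fin.snoc a b))) ⊤ 0)) = 0 := by
  rw [← extendA_typeOf_snoc, comp_extendA]
  refine gEval_eq_zero_congr φ
    (extendA_rel (fun x y => x = 0 ↔ y = 0) (fun _ => Iff.rfl) fun l _ => ?_)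
  rw [extendA_typeOf_snoc]
  exact (hπ.typeOf (Fin.snoc a b)).cast_eq_zero_iff_selectLit l

lemma le_card_filter_infPow_gEval_eq [Fintype A] [DecidableEq A] {k : ℕ} {γ : ℝ}
    (hπ : ModelDefining 0 π) (hstrong : StrongExtProp π k γ) (hm : m < k)
    (φ : FOx R ar (m+1)) {a : Fin m → A} (ha : Function.Injective a)
    (s : Atoms R ar (Fin (m+1)) → Bool) :
    γ * Nat.card A ≤ ((Finset.univ.filter fun b => ∀ j, a j ≠ b).filter fun b =>
      infPow (gEval φ (Nat.cast ∘ typeOf π (Fin.snoc a b))) =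
        infPow (gEval φ (extendA (Nat.cast ∘ typeOf π a) (selectLit s ⊤ 0)))).card := by
  -- the extension of the type of `a` selected by `s`, with the value `2` on selected literals
  refine (hstrong m hm a ha _ ((hπ.typeOf a).extendA (modelDefining_selectLit two_ne_zero s))
    (extendA_map_castSucc _ _)).trans ?_
  rw [← Set.ncard_coe_finset]
  refine Nat.cast_le.mpr (Set.ncard_le_ncard ?_ (Finset.finite_toSet _))
  intro b ⟨hb, hbool, hlarge⟩
  simp only [Finset.coe_filter, Finset.mem_filter, Finset.mem_univ, true_and, Set.mem_ofPred_eq]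
  refine ⟨fun j h => hb ⟨j, h⟩, ?_⟩
  rw [← extendA_typeOf_snoc, comp_extendA]
  refine gEval_infPow_congr φ
    (extendA_rel (fun x y => infPow x = infPow y) (fun _ => rfl) fun l hl => ?_)
  refine hlarge.infPow_eq_selectLit hl ?_
  rw [hbool l, extendA_of_exists_eq_last _ _ hl]

end typeOf_snoc

namespace Finset

lemma card_filter_ne_zero_le_sum {ι : Type*} (t : Finset ι) (f : ι → ℕ) :
    #{x ∈ t | f x ≠ 0} ≤ ∑ x ∈ t, f x :=
  calc #{x ∈ t | f x ≠ 0} = ∑ x ∈ t with f x ≠ 0, 1 := card_eq_sum_ones _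
    _ ≤ ∑ x ∈ t with f x ≠ 0, f x :=
        sum_le_sum fun _ hx => Nat.one_le_iff_ne_zero.mpr (mem_filter.mp hx).2
    _ ≤ ∑ x ∈ t, f x := sum_le_sum_of_subset (filter_subset _ _)

lemma card_filter_two_le_le_prod {ι : Type*} (t : Finset ι) {f : ι → ℕ}
    (hf : ∀ x ∈ t, f x ≠ 0) : #{x ∈ t | 2 ≤ f x} ≤ ∏ x ∈ t, f x :=
  calc #{x ∈ t | 2 ≤ f x} ≤ 2 ^ #{x ∈ t | 2 ≤ f x} := Nat.lt_two_pow_self.le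
    _ ≤ ∏ x ∈ t with 2 ≤ f x, f x := pow_card_le_prod _ _ _ fun _ hx => (mem_filter.mp hx).2
    _ ≤ ∏ x ∈ t, f x := prod_le_prod_of_subset_of_one_le' (filter_subset _ _)
        fun x hx _ => Nat.one_le_iff_ne_zero.mpr (hf x hx)

end Finset

def InfApprox (c : ℝ) (g : ℕ∞) (e : ℕ) : Prop := g = e ∨ (g = ⊤ ∧ c ≤ e)

namespace InfApprox

variable {c : ℝ} {g g' : ℕ∞} {e e' : ℕ}

lemma add (h : InfApprox c g e) (h' : InfApprox c g' e') : InfApprox c (g + g') (e + e') := by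
  rcases h with rfl | ⟨rfl, he⟩
  · rcases h' with rfl | ⟨rfl, he'⟩
    · exact .inl (Nat.cast_add e e').symm
    · exact .inr ⟨add_top _, he'.trans (by simp)⟩
  · exact .inr ⟨top_add _, he.trans (by simp)⟩

lemma mul (hc : 0 < c) (h : InfApprox c g e) (h' : InfApprox c g' e') :
    InfApprox c (g * g') (e * e') := by
  have ne_zero {e : ℕ} (he : c ≤ e) : e ≠ 0 := by rintro rfl; simp at he; linarith
  rcases h with rfl | ⟨rfl, he⟩ <;> rcases h' with rfl | ⟨rfl, he'⟩
  · exact .inl (Nat.cast_mul e e').symm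
  · rcases eq_or_ne e 0 with rfl | he0
    · exact .inl (by simp)
    · refine .inr ⟨ENat.mul_top (by exact_mod_cast he0), he'.trans ?_⟩
      exact_mod_cast Nat.le_mul_of_pos_left e' (Nat.pos_of_ne_zero he0)
  · rcases eq_or_ne e' 0 with rfl | he0
    · exact .inl (by simp)
    · refine .inr ⟨ENat.top_mul (by exact_mod_cast he0), he.trans ?_⟩
      exact_mod_cast Nat.le_mul_of_pos_right e (Nat.pos_of_ne_zero he0)
  · refine .inr ⟨WithTop.top_mul_top, he'.trans ?_⟩
    exact_mod_cast Nat.le_mul_of_pos_left e' (Nat.pos_of_ne_zero (ne_zero he))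

lemma infPow_eq (hc : 2 ≤ c) (h : InfApprox c g e) : infPow g = infPow e := by
  rcases h with rfl | ⟨rfl, he⟩
  · rfl
  · rw [infPow_of_two_le le_top, infPow_of_two_le]
    exact_mod_cast (hc.trans he : (2 : ℝ) ≤ e)

section quantifiers

open Finset

variable {ι σ : Type*} [Fintype σ] {t : Finset ι} {g : ι → ℕ∞} {E : ι → ℕ}
  {G : σ → ℕ∞} {sel : ι → σ}

lemma top_mul_sum (hc : 2 ≤ c) (hgE : ∀ b ∈ t, InfApprox c (g b) (E b))
    (hle : ∀ b ∈ t, g b ≤ G (sel b))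
    (hmany : ∀ s, c ≤ #{b ∈ t | infPow (g b) = infPow (G s)}) :
    InfApprox c (⊤ * ∑ s, G s) (∑ b ∈ t, E b) := by
  have hE (b) (hb : b ∈ t) : infPow (g b) = infPow (E b) := (hgE b hb).infPow_eq hc
  by_cases hG : ∀ s, G s = 0
  · have hE0 (b) (hb : b ∈ t) : E b = 0 := by
      have := nonpos_iff_eq_zero.mp (hG (sel b) ▸ hle b hb)
      rwa [← infPow_eq_zero, hE b hb, infPow_eq_zero, Nat.cast_eq_zero] at this
    left
    simp [hG, sum_eq_zero hE0]
  push Not at hG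
  obtain ⟨s, hs⟩ := hG
  have hsum : ∑ s, G s ≠ 0 := fun h => hs (sum_eq_zero_iff.mp h s (mem_univ s))
  refine .inr ⟨ENat.top_mul hsum, (hmany s).trans ?_⟩
  refine Nat.cast_le.mpr ((Finset.card_le_card fun b hb => ?_).trans
    (card_filter_ne_zero_le_sum t E))
  rw [mem_filter] at hb ⊢
  refine ⟨hb.1, ?_⟩
  rw [← Nat.cast_ne_zero (R := ℕ∞), ← infPow_eq_zero.ne, ← hE b hb.1, hb.2]
  exact infPow_eq_zero.ne.mpr hs

lemma infPow_prod (hc : 2 ≤ c) (hgE : ∀ b ∈ t, InfApprox c (g b) (E b))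
    (hle : ∀ b ∈ t, g b ≤ G (sel b)) (hzero : ∀ b ∈ t, g b = 0 → G (sel b) = 0)
    (hmany : ∀ s, c ≤ #{b ∈ t | infPow (g b) = infPow (G s)}) :
    InfApprox c (infPow (∏ s, G s)) (∏ b ∈ t, E b) := by
  have hE (b) (hb : b ∈ t) : infPow (g b) = infPow (E b) := (hgE b hb).infPow_eq hc
  by_cases h0 : ∃ s, G s = 0
  · obtain ⟨s, hs⟩ := h0
    obtain ⟨b, hb⟩ : {b ∈ t | infPow (g b) = infPow (G s)}.Nonempty := by
      rw [← card_pos, ← Nat.cast_pos (α := ℝ)]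
      linarith [hmany s]
    rw [mem_filter] at hb
    rw [hE b hb.1, hs] at hb
    have hEb : E b = 0 := by simpa [infPow_eq_zero] using hb.2
    left
    rw [prod_eq_zero (mem_univ s) hs, prod_eq_zero hb.1 hEb]
    rfl
  push Not at h0
  have hE0 (b) (hb : b ∈ t) : E b ≠ 0 := fun hEb => h0 _ <| hzero b hb <| by
    rw [← infPow_eq_zero, hE b hb, hEb]
    rfl
  by_cases h1 : ∀ s, G s = 1
  · have hE1 (b) (hb : b ∈ t) : E b = 1 := by
      have hgb : g b = 1 := le_antisymm (h1 (sel b) ▸ hle b hb)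
        (Order.one_le_iff_ne_zero.mpr fun h => h0 _ (hzero b hb h))
      simpa [hgb, infPow_eq_one] using (hE b hb).symm
    left
    rw [prod_eq_one fun s _ => h1 s, prod_eq_one hE1]
    rfl
  push Not at h1
  obtain ⟨s, hs⟩ := h1
  have hGs : 2 ≤ G s := ((G s).eq_zero_or_eq_one_or_two_le.resolve_left (h0 s)).resolve_left hs
  have h2 : 2 ≤ ∏ s, G s := hGs.trans
    (single_le_prod' (fun s _ => Order.one_le_iff_ne_zero.mpr (h0 s)) (mem_univ s))
  refine .inr ⟨infPow_of_two_le h2, (hmany s).trans ?_⟩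
  refine Nat.cast_le.mpr ((Finset.card_le_card fun b hb => ?_).trans
    (card_filter_two_le_le_prod t hE0))
  rw [mem_filter] at hb ⊢
  refine ⟨hb.1, ?_⟩
  rw [hE b hb.1, infPow_of_two_le hGs, infPow_eq_top] at hb
  exact_mod_cast hb.2

end quantifiers

end InfApprox

lemma FOx.le_width {i : ℕ} (ψ : FOx R ar i) : i ≤ ψ.width := by
  induction ψ with
  | eq | ne | atom => exact le_rfl
  | or φ θ ihφ ihθ | and φ θ ihφ ihθ => exact ihφ.trans (le_max_left _ _)
  | exq φ ih | allq φ ih => exact (Nat.le_succ _).trans ih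

lemma Function.Injective.snoc {m : ℕ} {a : Fin m → A} (ha : Function.Injective a) {b : A}
    (hb : ∀ j, a j ≠ b) : Function.Injective (Fin.snoc a b : Fin (m+1) → A) :=
  Fin.snoc_injective_of_injective ha fun ⟨j, hj⟩ => hb j hj

theorem infApprox_gEval_evalSx [Fintype R] [DecidableEq R] [Fintype A] [DecidableEq A] {k : ℕ}
    {γ : ℝ} (hγ : 2 ≤ γ * Nat.card A) {π : Lit R ar A → ℕ} (hπ : ModelDefining 0 π)
    (hstrong : StrongExtProp π k γ) {i : ℕ} (ψ : FOx R ar i) (hw : ψ.width ≤ k)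
    {a : Fin i → A} (ha : Function.Injective a) :
    InfApprox (γ * Nat.card A) (gEval ψ (Nat.cast ∘ typeOf π a)) (evalSx π ψ a) := by
  induction ψ with
  | eq j l | ne j l => exact .inl (by simp [gEval, evalSx, ha.eq_iff])
  | atom => exact .inl rfl
  | or φ θ ihφ ihθ =>
    exact (ihφ ((le_max_left _ _).trans hw) ha).add (ihθ ((le_max_right _ _).trans hw) ha)
  | and φ θ ihφ ihθ =>
    exact (ihφ ((le_max_left _ _).trans hw) ha).mul (by linarith)
      (ihθ ((le_max_right _ _).trans hw) ha)
  | exq φ ih =>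
    have hm : _ < k := (Nat.lt_succ_self _).trans_le (φ.le_width.trans hw)
    exact .top_mul_sum hγ (fun b hb => ih hw (ha.snoc (Finset.mem_filter.mp hb).2))
      (fun b _ => gEval_typeOf_snoc_le hπ φ a b)
      (le_card_filter_infPow_gEval_eq hπ hstrong hm φ ha)
  | allq φ ih =>
    have hm : _ < k := (Nat.lt_succ_self _).trans_le (φ.le_width.trans hw)
    exact .infPow_prod hγ (fun b hb => ih hw (ha.snoc (Finset.mem_filter.mp hb).2))
      (fun b _ => gEval_typeOf_snoc_le hπ φ a b)
      (fun b _ => (gEval_typeOf_snoc_eq_zero_iff hπ φ a b).mp)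
      (le_card_filter_infPow_gEval_eq hπ hstrong hm φ ha)

theorem statement_15_general
    {R : Type} [Fintype R] [DecidableEq R] {ar : R → ℕ}
    (k : ℕ) (γ : ℝ) (n : ℕ) (hγn : 2 ≤ γ * n)
    (π : Lit R ar (Fin n) → ℕ) (hmd : ModelDefining (0 : ℕ) π)
    (hstrong : StrongExtProp π k γ)
    {i : ℕ} (ψ : FOx R ar i) (hw : ψ.width ≤ k)
    (a : Fin i → Fin n) (ha : Function.Injective a) :
    gEval ψ (fun l => ((typeOf π a l : ℕ) : ℕ∞)) = ((evalSx π ψ a : ℕ) : ℕ∞) ∨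
    (gEval ψ (fun l => ((typeOf π a l : ℕ) : ℕ∞)) = ⊤ ∧
      γ * n ≤ ((evalSx π ψ a : ℕ) : ℝ)) := by
  have h := infApprox_gEval_evalSx (by rwa [Nat.card_fin]) hmd hstrong ψ hw ha
  rw [Nat.card_fin] at h
  exact h

/-- Let `γ > 0` and let `π` be an `ℕ`-interpretation on `[n]` with
the strong `(k,γ)`-extension property, and assume `γ·n ≥ 2`.  Then for every formula
`ψ(x_1,…,x_i) ∈ FO^k` (in NNF with excluding quantifiers) with associated
`∞`-expression `g_ψ` and every tuple `ā` of distinct elements of `[n]`, either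
(1) `π⟦ψ(ā)⟧ = g_ψ[ρ^π_ā] ∈ ℕ`, or (2) `g_ψ[ρ^π_ā] = ∞` and `π⟦ψ(ā)⟧ ≥ γ·n`. -/
theorem statement_15
    {R : Type} [Fintype R] [DecidableEq R] {ar : R → ℕ}
    (k : ℕ) (γ : ℝ) (hγ : 0 < γ) (n : ℕ) (hγn : 2 ≤ γ * n)
    (π : Lit R ar (Fin n) → ℕ) (hmd : ModelDefining (0 : ℕ) π)
    (hstrong : StrongExtProp π k γ)
    {i : ℕ} (ψ : FOx R ar i) (hw : ψ.width ≤ k)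
    (a : Fin i → Fin n) (ha : Function.Injective a) :
    gEval ψ (fun l => ((typeOf π a l : ℕ) : ℕ∞)) = ((evalSx π ψ a : ℕ) : ℕ∞) ∨
    (gEval ψ (fun l => ((typeOf π a l : ℕ) : ℕ∞)) = ⊤ ∧
      γ * n ≤ ((evalSx π ψ a : ℕ) : ℝ)) :=
  statement_15_general k γ n hγn π hmd hstrong ψ hw a ha
end

section
/- Let p: ℕ∖{0} → [0,1] be a probability distribution with p[x≥2] > 0. For every relational first-order sentence ψ: ψ ∈ Φ_0 (i.e., lim_{n→∞} μ_{n,p}[π⟦ψ⟧ = 0] = 1 for random ℕ-interpretations) if and only if ψ is asymptotically almost surely false under classical Boolean semantics on random finite τ-structures with atomic probability 1/2. -/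
/-!
Over ℕ, indeed over any semiring that is positive (no zero sums of nonzero terms, no zero
divisors), a sum or product vanishes exactly when the corresponding disjunction or conjunction
fails. Hence for a model-defining interpretation `π`, `π⟦ψ⟧ ≠ 0` iff `ψ` holds in the Boolean
structure whose true atoms are those whose positive literal is nonzero. Since `p{0} = 0`, a
`μ_{n,p}`-random interpretation is almost surely model-defining, and its Boolean structure is
uniformly distributed: each atom is true with probability 1/2, independently. So
`μ_{n,p}[π⟦ψ⟧ = 0] = 1 - Pr[ψ holds in a random structure]` for every `n`.
-/

open MeasureTheory Filter Set
open scoped ENNReal BigOperators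

variable {R : Type} {ar : R → ℕ} {A B K : Type}

/-- First-order formulae in negation normal form over the vocabulary `(R, ar)`,
with standard quantifiers, in a context of `i` variables (de Bruijn style:
`ex`/`all` bind the last variable of the extended context). -/
inductive FO (R : Type) (ar : R → ℕ) : ℕ → Type
  | eq   : {i : ℕ} → Fin i → Fin i → FO R ar i
  | ne   : {i : ℕ} → Fin i → Fin i → FO R ar i
  | atom : {i : ℕ} → (r : R) → (Fin (ar r) → Fin i) → Bool → FO R ar i
  | or   : {i : ℕ} → FO R ar i → FO R ar i → FO R ar i
  | and  : {i : ℕ} → FO R ar i → FO R ar i → FO R ar i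
  | ex   : {i : ℕ} → FO R ar (i+1) → FO R ar i
  | all  : {i : ℕ} → FO R ar (i+1) → FO R ar i

/-- Semiring semantics of first-order formulae over a commutative semiring `K`:
`∨`/`∃` are sums, `∧`/`∀` are products. -/
noncomputable def evalS [CommSemiring K] [Fintype A] [DecidableEq A]
    (π : Lit R ar A → K) : {i : ℕ} → FO R ar i → (Fin i → A) → K
  | _, .eq j l, v => if v j = v l then 1 else 0
  | _, .ne j l, v => if v j = v l then 0 else 1
  | _, .atom r as pos, v => π ⟨r, fun j => v (as j), pos⟩
  | _, .or φ θ, v => evalS π φ v + evalS π θ v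
  | _, .and φ θ, v => evalS π φ v * evalS π θ v
  | _, .ex φ, v => ∑ b : A, evalS π φ (Fin.snoc v b)
  | _, .all φ, v => ∏ b : A, evalS π φ (Fin.snoc v b)

/-- Semantics of first-order formulae in a lattice semiring (a bounded distributive
lattice, with `0 = ⊥`, `1 = ⊤`, addition `⊔` and multiplication `⊓`). -/
noncomputable def evalL [DistribLattice K] [BoundedOrder K] [Fintype A] [DecidableEq A]
    (π : Lit R ar A → K) : {i : ℕ} → FO R ar i → (Fin i → A) → K
  | _, .eq j l, v => if v j = v l then ⊤ else ⊥
  | _, .ne j l, v => if v j = v l then ⊥ else ⊤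
  | _, .atom r as pos, v => π ⟨r, fun j => v (as j), pos⟩
  | _, .or φ θ, v => evalL π φ v ⊔ evalL π θ v
  | _, .and φ θ, v => evalL π φ v ⊓ evalL π θ v
  | _, .ex φ, v => Finset.univ.sup fun b : A => evalL π φ (Fin.snoc v b)
  | _, .all φ, v => Finset.univ.inf fun b : A => evalL π φ (Fin.snoc v b)

/-- Classical Boolean satisfaction of a first-order formula (in NNF) in the
`τ`-structure determined by `S` (telling which atoms are true). -/
def bsat (S : Atoms R ar A → Bool) : {i : ℕ} → FO R ar i → (Fin i → A) → Prop
  | _, .eq j l, v => v j = v l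
  | _, .ne j l, v => v j ≠ v l
  | _, .atom r as pos, v => S ⟨r, fun j => v (as j)⟩ = pos
  | _, .or φ θ, v => bsat S φ v ∨ bsat S θ v
  | _, .and φ θ, v => bsat S φ v ∧ bsat S θ v
  | _, .ex φ, v => ∃ b : A, bsat S φ (Fin.snoc v b)
  | _, .all φ, v => ∀ b : A, bsat S φ (Fin.snoc v b)

/-- The distribution of random `τ`-structures on `[n]` with atomic probability 1/2:
each atom is true independently with probability 1/2. -/
noncomputable def muB {R : Type} [Fintype R] {ar : R → ℕ} (n : ℕ) :
    Measure (Atoms R ar (Fin n) → Bool) :=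
  Measure.pi fun _ => (2⁻¹ : ℝ≥0∞) • (Measure.dirac true + Measure.dirac false)

section SemiringSemantics

variable [CommSemiring K] [PartialOrder K] [CanonicallyOrderedAdd K] [NoZeroDivisors K]
  [Nontrivial K] [DecidableEq K] [Fintype A] [DecidableEq A]

theorem evalS_ne_zero_iff_bsat {π : Lit R ar A → K} (hπ : ModelDefining 0 π) :
    ∀ {i : ℕ} (φ : FO R ar i) (v : Fin i → A),
      evalS π φ v ≠ 0 ↔ bsat (fun a => decide (π ⟨a.1, a.2, true⟩ ≠ 0)) φ v
  | _, .eq j l, v => by by_cases h : v j = v l <;> simp [evalS, bsat, h]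
  | _, .ne j l, v => by by_cases h : v j = v l <;> simp [evalS, bsat, h]
  | _, .atom r as true, v => by simp [evalS, bsat]
  | _, .atom r as false, v => by simpa [evalS, bsat] using (hπ r fun j => v (as j)).symm
  | _, .or φ θ, v => by
    simp only [evalS, bsat, ← evalS_ne_zero_iff_bsat hπ φ, ← evalS_ne_zero_iff_bsat hπ θ,
      Ne, add_eq_zero, not_and_or]
  | _, .and φ θ, v => by
    simp only [evalS, bsat, ← evalS_ne_zero_iff_bsat hπ φ, ← evalS_ne_zero_iff_bsat hπ θ,
      Ne, mul_eq_zero, not_or]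
  | _, .ex φ, v => by
    simp only [evalS, bsat, ← evalS_ne_zero_iff_bsat hπ φ, Ne, Finset.sum_eq_zero_iff,
      Finset.mem_univ, true_imp_iff, not_forall]
  | _, .all φ, v => by
    simp only [evalS, bsat, ← evalS_ne_zero_iff_bsat hπ φ, Ne, Finset.prod_eq_zero_iff,
      Finset.mem_univ, true_and, not_exists]

end SemiringSemantics

section RandomInterpretations

variable [Fintype R] [MeasurableSpace K] [MeasurableSingletonClass K] {z : K} {p : Measure K}
  [IsProbabilityMeasure p]

instance : IsProbabilityMeasure ((2⁻¹ : ℝ≥0∞) • (Measure.dirac true + Measure.dirac false)) :=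
  ⟨by simp [ENNReal.inv_two_add_inv_two]⟩

instance : IsProbabilityMeasure (atomMeasure z p) := by
  have := Measure.isProbabilityMeasure_map (μ := p) (measurable_prodMk_right (y := z)).aemeasurable
  have := Measure.isProbabilityMeasure_map (μ := p) (measurable_prodMk_left (x := z)).aemeasurable
  exact ⟨by simp [atomMeasure, ENNReal.inv_two_add_inv_two]⟩

instance (n : ℕ) : IsProbabilityMeasure (muB (R := R) (ar := ar) n) := by
  unfold muB; infer_instance

def atomTrue [DecidableEq K] (z : K) (q : K × K) : Bool := decide (q.1 ≠ z)

theorem measurable_atomTrue [DecidableEq K] : Measurable (atomTrue z) :=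
  measurable_to_bool <| by
    convert (measurableSet_singleton z).compl.preimage measurable_fst
    ext q; simp [atomTrue]

theorem map_atomTrue_atomMeasure [DecidableEq K] (hp : p {z} = 0) :
    (atomMeasure z p).map (atomTrue z)
      = (2⁻¹ : ℝ≥0∞) • (Measure.dirac true + Measure.dirac false) := by
  have hpos : p.map (atomTrue z ∘ fun j => (j, z)) = Measure.dirac true := by
    rw [Measure.map_congr (g := fun _ => true) ((measure_eq_zero_iff_ae_notMem.1 hp).mono
      fun j hj => by simpa [atomTrue] using hj), Measure.map_const, measure_univ, one_smul]
  have hneg : p.map (atomTrue z ∘ fun j => (z, j)) = Measure.dirac false := by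
    simp [Function.comp_def, atomTrue]
  rw [atomMeasure, Measure.map_smul, Measure.map_add _ _ measurable_atomTrue,
    Measure.map_map measurable_atomTrue measurable_prodMk_right,
    Measure.map_map measurable_atomTrue measurable_prodMk_left, hpos, hneg]

theorem ae_modelDefining_interpOf (hp : p {z} = 0) (n : ℕ) :
    ∀ᵐ ω ∂muI (ar := ar) z p n, ModelDefining z (interpOf ω) := by
  have hz : ∀ᵐ j ∂p, j ≠ z := measure_eq_zero_iff_ae_notMem.1 hp
  have hatom : ∀ᵐ q ∂atomMeasure z p, (q.1 = z ↔ q.2 ≠ z) := by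
    refine Measure.ae_smul_measure (ae_add_measure_iff.2 ⟨?_, ?_⟩) _
    · rw [(measurableEmbedding_prod_mk_right z).ae_map_iff]
      simpa using hz
    · rw [(measurableEmbedding_prodMk_left z).ae_map_iff]
      simpa using hz
  have hall : ∀ᵐ ω ∂muI (ar := ar) z p n, ∀ a, ((ω a).1 = z ↔ (ω a).2 ≠ z) :=
    ae_all_iff.2 fun a =>
      (Measure.tendsto_eval_ae_ae (μ := fun _ => atomMeasure z p) (i := a)).eventually hatom
  exact hall.mono fun ω hω r as => hω ⟨r, as⟩

theorem map_muI_eq_muB [DecidableEq K] (hp : p {z} = 0) (n : ℕ) :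
    (muI (ar := ar) z p n).map (fun ω a => atomTrue z (ω a)) = muB n := by
  rw [muI, Measure.pi_map_pi fun _ => measurable_atomTrue.aemeasurable]
  simp_rw [map_atomTrue_atomMeasure hp]
  rfl

theorem muI_evalS_eq_zero [CommSemiring K] [PartialOrder K] [CanonicallyOrderedAdd K]
    [NoZeroDivisors K] [Nontrivial K] [DecidableEq K] (hp : p {0} = 0) {n i : ℕ}
    (φ : FO R ar i) (v : Fin i → Fin n) :
    muI (ar := ar) (0 : K) p n {ω | evalS (interpOf ω) φ v = 0}
      = 1 - muB n {S | bsat S φ v} := by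
  have hae : {ω | evalS (interpOf ω) φ v = 0}
      =ᵐ[muI (ar := ar) (0 : K) p n] (fun ω a => atomTrue 0 (ω a)) ⁻¹' {S | bsat S φ v}ᶜ :=
    eventuallyEq_set.2 <| (ae_modelDefining_interpOf hp n).mono fun ω hω =>
      not_ne_iff.symm.trans (evalS_ne_zero_iff_bsat hω φ v).not
  have hmeas : Measurable fun (ω : Atoms R ar (Fin n) → K × K) a => atomTrue (0 : K) (ω a) :=
    measurable_pi_lambda _ fun a => measurable_atomTrue.comp (measurable_pi_apply a)
  rw [measure_congr hae, ← Measure.map_apply hmeas MeasurableSet.of_discrete, map_muI_eq_muB hp,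
    measure_compl MeasurableSet.of_discrete (measure_ne_top _ _), measure_univ]

end RandomInterpretations

theorem tendsto_one_sub_nhds_one_iff {α : Type*} {l : Filter α} {g : α → ℝ≥0∞}
    (hg : ∀ a, g a ≤ 1) :
    Tendsto (fun a => 1 - g a) l (nhds 1) ↔ Tendsto g l (nhds 0) := by
  have hcont := ENNReal.continuous_sub_left ENNReal.one_ne_top
  refine ⟨fun h => ?_, fun h => by simpa [Function.comp_def] using (hcont.tendsto 0).comp h⟩
  simpa [Function.comp_def, ENNReal.sub_sub_cancel ENNReal.one_ne_top (hg _)]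
    using (hcont.tendsto 1).comp h

theorem statement_17_general
    {R : Type} [Fintype R] {ar : R → ℕ}
    (p : Measure ℕ) [IsProbabilityMeasure p]
    (hp0 : p {0} = 0)
    (ψ : FO R ar 0) :
    Tendsto (fun n =>
        muI (ar := ar) (0 : ℕ) p n {ω | evalS (interpOf ω) ψ Fin.elim0 = 0})
      atTop (nhds 1) ↔
    Tendsto (fun n =>
        muB (ar := ar) n {S | bsat S ψ Fin.elim0})
      atTop (nhds 0) := by
  simp_rw [muI_evalS_eq_zero hp0]
  exact tendsto_one_sub_nhds_one_iff fun _ => prob_le_one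

/-- Let `p` be a probability distribution on `ℕ ∖ {0}` with
`p[x ≥ 2] > 0`.  A relational first-order sentence `ψ` belongs to `Φ_0`
(random `ℕ`-interpretations almost surely evaluate it to `0`) if and only if `ψ`
is asymptotically almost surely false under classical Boolean semantics on random
finite `τ`-structures with atomic probability 1/2. -/
theorem statement_17
    {R : Type} [Fintype R] [DecidableEq R] {ar : R → ℕ}
    (p : Measure ℕ) [IsProbabilityMeasure p]
    (hp0 : p {0} = 0) (hp2 : 0 < p {j : ℕ | 2 ≤ j})
    (ψ : FO R ar 0) :
    Tendsto (fun n =>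
        muI (ar := ar) (0 : ℕ) p n {ω | evalS (interpOf ω) ψ Fin.elim0 = 0})
      atTop (nhds 1) ↔
    Tendsto (fun n =>
        muB (ar := ar) n {S | bsat S ψ Fin.elim0})
      atTop (nhds 0) :=
  statement_17_general p hp0 ψ
end
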